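/- arXiv:1905.13726 — 2 statements merged into one kernel-verified Lean document; each statement's English description precedes it below -/
import Mathlib

section
/- Let $u$ be a smooth section of a Hermitian line bundle with metric connection $\nabla$ over a Riemannian manifold $M^n$, and define the real two-form $\psi(u)(e_j,e_k) := 2\langle i\nabla_{e_j}u, \nabla_{e_k}u\rangle$. Then pointwise $|\psi(u)| \le |\nabla u|^2$, where the norm of a two-form $\omega$ is $|\omega|^2 = \sum_{j<k}\omega(e_j,e_k)^2$. -/
open Finset

/-! Writing `f (b j) = X j + i Y j`, the form is `ψ j k = 2 (X j Y k - Y j X k)`, so by Lagrange's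
identity `∑_{j<k} ψ j k ^ 2 = 4 (|X|²|Y|² - ⟨X, Y⟩²) ≤ 4 |X|²|Y|² ≤ (|X|² + |Y|²)²`, and
`|X|² + |Y|² = ∑ j ‖f (b j)‖²`. -/

theorem Finset.two_nsmul_sum_sum_ite_lt {ι M : Type*} [Fintype ι] [LinearOrder ι]
    [AddCommMonoid M] (g : ι → ι → M) (hsymm : ∀ j k, g j k = g k j) (hdiag : ∀ j, g j j = 0) :
    2 • ∑ j, ∑ k, (if j < k then g j k else 0) = ∑ j, ∑ k, g j k := by
  have hsplit : ∀ j k, g j k = (if j < k then g j k else 0) + (if k < j then g k j else 0) := by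
    intro j k
    rcases lt_trichotomy j k with h | rfl | h
    · simp [h, h.not_gt]
    · simp [hdiag]
    · simp [h, h.not_gt, hsymm j k]
  rw [sum_congr rfl fun j _ => sum_congr rfl fun k _ => hsplit j k]
  simp_rw [two_nsmul, sum_add_distrib]
  rw [sum_comm (f := fun j k => if k < j then g k j else 0)]

theorem Finset.sum_sum_mul_sub_mul_sq {ι R : Type*} [Fintype ι] [CommRing R] (X Y : ι → R) :
    ∑ j, ∑ k, (X j * Y k - Y j * X k) ^ 2 =
      2 * ((∑ j, X j ^ 2) * (∑ j, Y j ^ 2) - (∑ j, X j * Y j) ^ 2) := by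
  have hexpand : ∀ j k, (X j * Y k - Y j * X k) ^ 2 =
      X j ^ 2 * Y k ^ 2 + Y j ^ 2 * X k ^ 2 - 2 * ((X j * Y j) * (X k * Y k)) := by
    intro j k; ring
  simp_rw [hexpand, sum_sub_distrib, sum_add_distrib, ← mul_sum, ← sum_mul]
  ring

theorem Complex.re_I_mul_mul_conj (z w : ℂ) :
    (I * z * (starRingEnd ℂ) w).re = z.re * w.im - z.im * w.re := by
  simp only [mul_re, mul_im, I_re, I_im, conj_re, conj_im]
  ring

/-- Pointwise bound `|ψ(u)| ≤ |∇u|²`: at a point of an `n`-dimensional Riemannian manifold,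
the covariant derivative `∇u` of a section of a Hermitian line bundle is a real-linear map
`f` from the tangent space (an `n`-dimensional real inner product space) to the fibre `≅ ℂ`;
the real two-form `ψ(u)(e_j,e_k) = 2⟨i ∇_{e_j} u, ∇_{e_k} u⟩` (real part of the Hermitian
product) satisfies `√(∑_{j<k} ψ(e_j,e_k)²) ≤ ∑_j ‖f(e_j)‖²` for any orthonormal basis. -/
theorem statement0 {n : ℕ} {V : Type*} [NormedAddCommGroup V] [InnerProductSpace ℝ V]
    (b : OrthonormalBasis (Fin n) ℝ V) (f : V →ₗ[ℝ] ℂ)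
    (ψ : Fin n → Fin n → ℝ)
    (hψ : ∀ j k, ψ j k = 2 * (Complex.I * f (b j) * (starRingEnd ℂ) (f (b k))).re) :
    Real.sqrt (∑ j, ∑ k, if j < k then (ψ j k)^2 else 0) ≤ ∑ j, ‖f (b j)‖^2 := by
  set X : Fin n → ℝ := fun j => (f (b j)).re
  set Y : Fin n → ℝ := fun j => (f (b j)).im
  have hψXY : ∀ j k, ψ j k = 2 * (X j * Y k - Y j * X k) := fun j k => by
    rw [hψ, Complex.re_I_mul_mul_conj]
  have hsum_lt : (∑ j, ∑ k, if j < k then (ψ j k)^2 else 0) =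
      4 * ((∑ j, X j ^ 2) * (∑ j, Y j ^ 2) - (∑ j, X j * Y j) ^ 2) := by
    have hhalf := two_nsmul_sum_sum_ite_lt (fun j k => ψ j k ^ 2)
      (fun j k => by simp only [hψXY]; ring) (fun j => by simp only [hψXY]; ring)
    have hfull : ∑ j, ∑ k, ψ j k ^ 2 =
        8 * ((∑ j, X j ^ 2) * (∑ j, Y j ^ 2) - (∑ j, X j * Y j) ^ 2) := by
      simp_rw [hψXY, mul_pow, ← mul_sum, sum_sum_mul_sub_mul_sq]
      ring
    rw [two_nsmul] at hhalf
    linarith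
  have hnorm : ∑ j, ‖f (b j)‖^2 = ∑ j, X j ^ 2 + ∑ j, Y j ^ 2 := by
    simp_rw [← sum_add_distrib, Complex.sq_norm, Complex.normSq_apply, sq]
    rfl
  rw [hsum_lt, hnorm, Real.sqrt_le_left (by positivity)]
  nlinarith [sq_nonneg (∑ j, X j ^ 2 - ∑ j, Y j ^ 2), sq_nonneg (∑ j, X j * Y j)]
end

section
/- Let $\Omega \subset \mathbb{R}^n$ be open, let $p > 2$, and let $W:\mathbb{C}\to\mathbb{R}$ be a $C^2$ radial potential with $W(u) = |u|^p$ for $|u|\ge 2$ and $W$ smooth everywhere. Then there is a constant $C$ (depending only on $W$ and $p$) such that for all $a, b \in \mathbb{C}$: $(W'(a) - W'(b))\cdot(a-b) \ge \frac{1}{C}|a-b|^p - C|a-b|$, where $W'(a)\cdot v$ denotes the real directional derivative of $W$ at $a$ in direction $v$. -/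
open RealInnerProductSpace

lemma hasFDerivAt_norm_rpow' (p : ℝ) (hp : 2 < p) (u : ℂ) :
    HasFDerivAt (fun x : ℂ => ‖x‖ ^ p) ((p * ‖u‖ ^ (p - 2)) • (innerSL ℝ u)) u := by
  have h1 : HasFDerivAt (fun x : ℂ => ‖x‖ ^ 2) (2 • (innerSL ℝ u)) u :=
    (hasStrictFDerivAt_norm_sq u).hasFDerivAt
  have h2 : HasDerivAt (fun t : ℝ => t ^ (p / 2))
      ((p / 2) * (‖u‖ ^ 2) ^ (p / 2 - 1)) (‖u‖ ^ 2) :=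
    Real.hasDerivAt_rpow_const (Or.inr (by linarith))
  have h3 : HasFDerivAt (fun x : ℂ => ((‖x‖ ^ 2 : ℝ)) ^ (p / 2))
      ((p / 2 * (‖u‖ ^ 2) ^ (p / 2 - 1)) • 2 • (innerSL ℝ u)) u :=
    by have := HasDerivAt.comp_hasFDerivAt u h2 h1; exact this
  have he : (fun x : ℂ => ((‖x‖ ^ 2 : ℝ)) ^ (p / 2)) = fun x : ℂ => ‖x‖ ^ p := by
    funext x
    rw [← Real.rpow_natCast ‖x‖ 2, ← Real.rpow_mul (norm_nonneg x)]
    congr 1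
    push_cast
    ring
  have hc : (‖u‖ ^ 2 : ℝ) ^ (p / 2 - 1) = ‖u‖ ^ (p - 2) := by
    rw [← Real.rpow_natCast ‖u‖ 2, ← Real.rpow_mul (norm_nonneg u)]
    congr 1
    push_cast
    ring
  rw [he] at h3
  convert h3 using 1
  rw [hc]
  ext v
  simp only [ContinuousLinearMap.smul_apply, smul_eq_mul]
  ring


lemma mono_rpow (p : ℝ) (hp : 2 < p) (a b : ℂ) :
    (2:ℝ) ^ (1 - p) * ‖a - b‖ ^ p ≤
      p * (‖a‖ ^ (p-2) * ⟪a, a-b⟫ - ‖b‖ ^ (p-2) * ⟪b, a-b⟫) := by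
  rcases eq_or_ne a b with rfl | hab
  · simp [Real.zero_rpow (by positivity : p ≠ 0)]
  set A := ‖a‖ ^ (p-2) with hA
  set B := ‖b‖ ^ (p-2) with hB
  have hd : 0 < ‖a - b‖ := by simpa [sub_ne_zero] using hab
  have h1 : ⟪a, a-b⟫ = ‖a‖^2 - ⟪a, b⟫ := by
    rw [inner_sub_right, real_inner_self_eq_norm_sq]
  have h2 : ⟪b, a-b⟫ = ⟪a, b⟫ - ‖b‖^2 := by
    rw [inner_sub_right, real_inner_self_eq_norm_sq, real_inner_comm]
  have h3 : ‖a - b‖^2 = ‖a‖^2 - 2*⟪a, b⟫ + ‖b‖^2 := norm_sub_sq_real a b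
  have hsign : 0 ≤ (A - B) * (‖a‖^2 - ‖b‖^2) := by
    rcases le_total ‖a‖ ‖b‖ with h | h
    · have hA' : A ≤ B := Real.rpow_le_rpow (norm_nonneg a) h (by linarith)
      have hs : ‖a‖^2 ≤ ‖b‖^2 := by nlinarith [norm_nonneg a, norm_nonneg b]
      nlinarith
    · have hA' : B ≤ A := Real.rpow_le_rpow (norm_nonneg b) h (by linarith)
      have hs : ‖b‖^2 ≤ ‖a‖^2 := by nlinarith [norm_nonneg a, norm_nonneg b]
      nlinarith
  have hlow : (A+B)/2 * ‖a-b‖^2 ≤ A * ⟪a, a-b⟫ - B * ⟪b, a-b⟫ := by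
    have hid : A * ⟪a, a-b⟫ - B * ⟪b, a-b⟫
        = (A+B)/2 * ‖a-b‖^2 + (A - B)*(‖a‖^2 - ‖b‖^2)/2 := by
      rw [h1, h2, h3]; ring
    linarith
  have hmax : ‖a - b‖ / 2 ≤ max ‖a‖ ‖b‖ := by
    have := norm_sub_le a b
    rcases le_total ‖a‖ ‖b‖ with h | h
    · rw [max_eq_right h]; linarith
    · rw [max_eq_left h]; linarith
  have hAB : (‖a-b‖/2) ^ (p-2) ≤ A + B := by
    have h0 : (‖a-b‖/2) ^ (p-2) ≤ (max ‖a‖ ‖b‖) ^ (p-2) :=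
      Real.rpow_le_rpow (by positivity) hmax (by linarith)
    have hA0 : 0 ≤ A := Real.rpow_nonneg (norm_nonneg a) _
    have hB0 : 0 ≤ B := Real.rpow_nonneg (norm_nonneg b) _
    rcases le_total ‖a‖ ‖b‖ with h | h
    · rw [max_eq_right h] at h0; linarith
    · rw [max_eq_left h] at h0; linarith
  have hq : (‖a-b‖/2) ^ (p-2) = ‖a-b‖^(p-2) / 2^(p-2) :=
    Real.div_rpow hd.le (by norm_num : (0:ℝ) ≤ 2) _
  have hd2 : ‖a-b‖^(p-2) * ‖a-b‖^(2:ℕ) = ‖a-b‖^p := by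
    rw [← Real.rpow_natCast ‖a-b‖ 2, ← Real.rpow_add hd]; norm_num
  have h2p : (2:ℝ)^(1-p) * 2^(p-2) = 1/2 := by
    rw [← Real.rpow_add two_pos, show (1:ℝ) - p + (p - 2) = -1 by ring,
      Real.rpow_neg_one]
    norm_num
  have h2ne : (0:ℝ) < (2:ℝ)^(p-2) := by positivity
  have hmain : (2:ℝ)^(1-p) * ‖a-b‖^p ≤ A * ⟪a, a-b⟫ - B * ⟪b, a-b⟫ := by
    calc (2:ℝ)^(1-p) * ‖a-b‖^p = (1/2) * ((‖a-b‖/2)^(p-2) * ‖a-b‖^2) := by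
          rw [hq, ← hd2, show (2:ℝ)^(1-p) = 1/2 / 2^(p-2) by rw [eq_div_iff h2ne.ne']; exact h2p]; ring
      _ ≤ (1/2) * ((A+B) * ‖a-b‖^2) := by
          have := mul_le_mul_of_nonneg_right hAB (by positivity : (0:ℝ) ≤ ‖a-b‖^2)
          linarith
      _ = (A+B)/2 * ‖a-b‖^2 := by ring
      _ ≤ _ := hlow
  have hpos : 0 ≤ (2:ℝ)^(1-p) * ‖a-b‖^p := by positivity
  nlinarith [hmain, hpos]


/-- Coercivity of the derivative of the modified double-well potential: if `W : ℂ → ℝ` is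
a smooth radial potential with `W(u) = |u|^p` for `|u| ≥ 2` (`p > 2`), then there is a
constant `C > 0` such that for all `a, b ∈ ℂ`,
`(W'(a) - W'(b))·(a-b) ≥ C⁻¹ |a-b|^p - C |a-b|`,
where `W'(a)·v` is the real directional derivative of `W` at `a` in direction `v`. -/
theorem statement8 (p : ℝ) (hp : 2 < p) (W : ℂ → ℝ)
    (hW : ContDiff ℝ (⊤ : ℕ∞) W)
    (hrad : ∀ a b : ℂ, ‖a‖ = ‖b‖ → W a = W b)
    (hlarge : ∀ u : ℂ, 2 ≤ ‖u‖ → W u = ‖u‖ ^ p) :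
    ∃ C : ℝ, 0 < C ∧ ∀ a b : ℂ,
      (1/C) * ‖a - b‖ ^ p - C * ‖a - b‖
        ≤ fderiv ℝ W a (a - b) - fderiv ℝ W b (a - b) := by
  -- fderiv of W at large points
  have hFW : ∀ x : ℂ, 2 < ‖x‖ →
      fderiv ℝ W x = (p * ‖x‖ ^ (p - 2)) • (innerSL ℝ x) := by
    intro x hx
    have hopen : IsOpen {y : ℂ | 2 < ‖y‖} := isOpen_lt continuous_const continuous_norm
    have hev : W =ᶠ[nhds x] (fun y : ℂ => ‖y‖ ^ p) := by
      filter_upwards [hopen.mem_nhds hx] with y hy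
      exact hlarge y (le_of_lt hy)
    rw [hev.fderiv_eq, (hasFDerivAt_norm_rpow' p hp x).fderiv]
  -- bound on the closed ball
  obtain ⟨x₀, _, hx₀'⟩ := (isCompact_closedBall (0:ℂ) 2).exists_isMaxOn
    ⟨0, by simp⟩ ((hW.continuous_fderiv (by simp)).norm.continuousOn)
  have hx₀ : ∀ x ∈ Metric.closedBall (0:ℂ) 2, ‖fderiv ℝ W x‖ ≤ ‖fderiv ℝ W x₀‖ := hx₀'
  set M : ℝ := ‖fderiv ℝ W x₀‖ + p * 2 ^ (p - 1) with hM
  have hM0 : 0 ≤ M := by positivity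
  have hbound : ∀ x v : ℂ, |fderiv ℝ W x v - p * ‖x‖ ^ (p-2) * ⟪x, v⟫| ≤ M * ‖v‖ := by
    intro x v
    rcases le_or_gt ‖x‖ 2 with hx | hx
    · have hb1 : |fderiv ℝ W x v| ≤ ‖fderiv ℝ W x₀‖ * ‖v‖ := by
        calc |fderiv ℝ W x v| = ‖fderiv ℝ W x v‖ := rfl
          _ ≤ ‖fderiv ℝ W x‖ * ‖v‖ := (fderiv ℝ W x).le_opNorm v
          _ ≤ ‖fderiv ℝ W x₀‖ * ‖v‖ := by
              have := hx₀ x (by simpa [Metric.mem_closedBall, dist_eq_norm] using hx)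
              exact mul_le_mul_of_nonneg_right this (norm_nonneg v)
      have hb2 : |p * ‖x‖ ^ (p-2) * ⟪x, v⟫| ≤ p * 2 ^ (p-1) * ‖v‖ := by
        have hi : |⟪x, v⟫| ≤ ‖x‖ * ‖v‖ := abs_real_inner_le_norm x v
        have hr : ‖x‖ ^ (p-2) ≤ (2:ℝ) ^ (p-2) :=
          Real.rpow_le_rpow (norm_nonneg x) hx (by linarith)
        have h21 : (2:ℝ) ^ (p-2) * 2 = 2 ^ (p-1) := by
          rw [← Real.rpow_add_one (by norm_num : (2:ℝ) ≠ 0) (p-2)]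
          congr 1
          ring
        have h0x : 0 ≤ ‖x‖ ^ (p-2) := Real.rpow_nonneg (norm_nonneg x) _
        calc |p * ‖x‖ ^ (p-2) * ⟪x, v⟫| = p * ‖x‖ ^ (p-2) * |⟪x, v⟫| := by
              rw [abs_mul, abs_of_nonneg (by positivity : (0:ℝ) ≤ p * ‖x‖ ^ (p-2))]
          _ ≤ p * ‖x‖ ^ (p-2) * (‖x‖ * ‖v‖) :=
              mul_le_mul_of_nonneg_left hi (by positivity)
          _ ≤ p * 2 ^ (p-1) * ‖v‖ := by
              rw [← h21]
              have h1 : ‖x‖ ^ (p-2) * (‖x‖ * ‖v‖) ≤ 2 ^ (p-2) * (2 * ‖v‖) := by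
                apply mul_le_mul hr ?_ (by positivity) (by positivity)
                exact mul_le_mul_of_nonneg_right hx (norm_nonneg v)
              nlinarith [norm_nonneg v, Real.rpow_nonneg (by norm_num : (0:ℝ) ≤ 2) (p-2)]
      calc |fderiv ℝ W x v - p * ‖x‖ ^ (p-2) * ⟪x, v⟫|
          ≤ |fderiv ℝ W x v| + |p * ‖x‖ ^ (p-2) * ⟪x, v⟫| := abs_sub _ _
        _ ≤ M * ‖v‖ := by rw [hM]; nlinarith [hb1, hb2, norm_nonneg v]
    · rw [hFW x hx]
      simp only [ContinuousLinearMap.smul_apply, innerSL_apply_apply, smul_eq_mul]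
      rw [show p * ‖x‖ ^ (p-2) * ⟪x, v⟫ - p * ‖x‖ ^ (p-2) * ⟪x, v⟫ = 0 by ring]
      simpa using mul_nonneg hM0 (norm_nonneg v)
  refine ⟨max ((2:ℝ) ^ (p-1)) (2*M + 1), lt_of_lt_of_le (by positivity) (le_max_left _ _), ?_⟩
  intro a b
  set C : ℝ := max ((2:ℝ) ^ (p-1)) (2*M + 1) with hC
  have hCpos : 0 < C := lt_of_lt_of_le (by positivity) (le_max_left _ _)
  have h1 := abs_le.1 (hbound a (a - b))
  have h2 := abs_le.1 (hbound b (a - b))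
  have h3 := mono_rpow p hp a b
  have e1 : (1/C) * ‖a-b‖ ^ p ≤ (2:ℝ)^(1-p) * ‖a-b‖ ^ p := by
    have hpow : (2:ℝ)^(1-p) = ((2:ℝ)^(p-1))⁻¹ := by
      rw [← Real.rpow_neg (by norm_num : (0:ℝ) ≤ 2), neg_sub]
    have : (1:ℝ)/C ≤ ((2:ℝ)^(p-1))⁻¹ := by
      rw [one_div]
      exact inv_anti₀ (by positivity) (le_max_left _ _)
    rw [hpow]
    exact mul_le_mul_of_nonneg_right this (Real.rpow_nonneg (norm_nonneg _) _)
  have e2 : 2*M*‖a-b‖ ≤ C * ‖a-b‖ := by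
    apply mul_le_mul_of_nonneg_right _ (norm_nonneg _)
    exact le_trans (by linarith) (le_max_right _ _)
  linarith [h1.1, h2.2, h3, e1, e2]
end
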